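/- In the setting of the cohomological localization theorem, suppose additionally that C generates T and that L : A ⥤ A preserves small coproducts. Then the lifted localization functor L̃ : T ⥤ T preserves small coproducts. -/
import Mathlib


open CategoryTheory CategoryTheory.Limits CategoryTheory.Pretriangulated

universe u v w

/-- The category of `ℤ`-graded modules over a `ℤ`-graded ring `Λ`. -/
structure GradedModuleCat (Λ : ℤ → Type u) [∀ i, AddCommGroup (Λ i)]
    [DirectSum.GRing Λ] : Type (u + 1) where
  M : ℤ → Type u
  [isAddCommGroup : ∀ i, AddCommGroup (M i)]
  [isModule : DirectSum.Gmodule Λ M]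

attribute [instance] GradedModuleCat.isAddCommGroup GradedModuleCat.isModule

variable {Λ : ℤ → Type u} [∀ i, AddCommGroup (Λ i)] [DirectSum.GRing Λ]

/-- Morphisms of graded `Λ`-modules: degreewise additive maps commuting with
the `Λ`-action. -/
@[ext]
structure GradedModuleCat.Hom (M N : GradedModuleCat Λ) : Type u where
  f : ∀ i, M.M i →+ N.M i
  smul_f : ∀ (j i : ℤ) (a : Λ j) (m : M.M i),
    f (j + i) (GradedMonoid.GSMul.smul a m) = GradedMonoid.GSMul.smul a (f i m)

instance : Category (GradedModuleCat Λ) where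
  Hom M N := GradedModuleCat.Hom M N
  id M := ⟨fun _ => AddMonoidHom.id _, fun _ _ _ _ => rfl⟩
  comp φ ψ := ⟨fun i => (ψ.f i).comp (φ.f i), fun j i a m => by
    simp [φ.smul_f, ψ.smul_f]⟩
  id_comp φ := by
    apply GradedModuleCat.Hom.ext; funext i; apply AddMonoidHom.ext; intro m; rfl
  comp_id φ := by
    apply GradedModuleCat.Hom.ext; funext i; apply AddMonoidHom.ext; intro m; rfl
  assoc φ ψ χ := by
    apply GradedModuleCat.Hom.ext; funext i; apply AddMonoidHom.ext; intro m; rfl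

/-- An object `C` of a category is compact if the functor `Hom(C, -)`
preserves small coproducts. -/
def IsCompactObject {T : Type w} [Category.{v} T] (C : T) : Prop :=
  ∀ ι : Type v, PreservesColimitsOfShape (Discrete ι) (coyoneda.obj (Opposite.op C))

/-- If `C` generates `T` (so that `H* = Hom*_T(C, -)` reflects isomorphisms) and
`L` preserves small coproducts, then the lifted localization functor `L̃`
preserves small coproducts. -/
theorem stmt_19 {T : Type w} [Category.{v} T] [HasZeroObject T] [Preadditive T]
    [HasShift T ℤ] [∀ n : ℤ, (shiftFunctor T n).Additive] [Pretriangulated T]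
    [HasCoproducts.{v} T]
    -- the cohomological functor `H*`, which reflects isomorphisms
    (H : T ⥤ GradedModuleCat Λ) [H.ReflectsIsomorphisms]
    -- `H` preserves small products and coproducts
    (hprod : ∀ κ : Type v, PreservesLimitsOfShape (Discrete κ) H)
    (hcoprod : ∀ κ : Type v, PreservesColimitsOfShape (Discrete κ) H)
    -- the localization functor `(L, Ψ)` on graded `Λ`-modules, preserving coproducts
    (L : GradedModuleCat Λ ⥤ GradedModuleCat Λ) (Ψ : 𝟭 (GradedModuleCat Λ) ⟶ L)
    (h₁ : ∀ M, IsIso (L.map (Ψ.app M)))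
    (h₂ : ∀ M, L.map (Ψ.app M) = Ψ.app (L.obj M))
    (hL : ∀ κ : Type v, PreservesColimitsOfShape (Discrete κ) L)
    -- the lifted exact localization functor `(L̃, Ψ̃)` with `H* L̃ ≅ L H*`
    (Lt : T ⥤ T) (Ψt : 𝟭 T ⟶ Lt) [Lt.CommShift ℤ] [Lt.IsTriangulated]
    (ht₁ : ∀ X : T, IsIso (Lt.map (Ψt.app X)))
    (ht₂ : ∀ X : T, Lt.map (Ψt.app X) = Ψt.app (Lt.obj X))
    (hiso : Nonempty (H ⋙ L ≅ Lt ⋙ H)) :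
    ∀ κ : Type v, PreservesColimitsOfShape (Discrete κ) Lt := by
  intro κ
  haveI := hcoprod κ
  haveI := hL κ
  haveI : PreservesColimitsOfShape (Discrete κ) (H ⋙ L) :=
    comp_preservesColimitsOfShape H L
  haveI : PreservesColimitsOfShape (Discrete κ) (Lt ⋙ H) :=
    preservesColimitsOfShape_of_natIso hiso.some
  haveI : ReflectsColimitsOfShape (Discrete κ) H :=
    reflectsColimitsOfShape_of_reflectsIsomorphisms
  exact preservesColimitsOfShape_of_reflects_of_preserves Lt H
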